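/- arXiv:2103.03971 — 4 statements merged into one kernel-verified Lean document; each statement's English description precedes it below -/
import Mathlib

section
/- Let φ : 2^{<ω} → 2^{<ω} be a computable monotone map such that |φ(X↾n)| → ∞ for every X ∈ 2^ω, and let Φ : 2^ω → 2^ω be the induced total map (Φ(X) is the unique sequence extending every φ(X↾n)). Assume Φ is nowhere constant: for every σ ∈ 2^{<ω} there exist X, Y ∈ ⟦σ⟧ with Φ(X) ≠ Φ(Y). Then the canonical generator ψ of Φ, defined by letting ψ(σ) be the longest common initial segment of {Φ(X) : X ∈ ⟦σ⟧} (a finite string, by nowhere constancy), is a computable function 2^{<ω} → 2^{<ω}. -/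
open Filter

/-- The length-`n` initial segment of `X ∈ 2^ω`, as a finite binary string. -/
def seg (X : ℕ → Bool) (n : ℕ) : List Bool := (List.range n).map X

/-- The cylinder `⟦σ⟧` of all sequences extending the string `σ`. -/
def cyl (σ : List Bool) : Set (ℕ → Bool) := {X | seg X σ.length = σ}

/-!
The value `ψ σ` is found by a search. Let `Sₙ` be the list of the strings `φ (σ ++ τ)` with
`|τ| = n`. If `c` is a prefix of every member of `Sₙ` while `c ++ [false]` and `c ++ [true]` are
each a prefix of some member, then `c = ψ σ`: every `Φ X` with `X ∈ ⟦σ⟧` extends a member of `Sₙ`,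
hence `c`, and no longer common prefix exists because `Φ` takes both values at position `|c|` on
`⟦σ⟧`. Conversely, if `Φ X` and `Φ Y` differ at `m` for some `X, Y ∈ ⟦σ⟧`, then `|ψ σ| ≤ m`, and
compactness of Cantor space yields an `n` for which all members of `Sₙ` are longer than `m`; for
this `n` the string `ψ σ` passes the test. The test is decidable in `(σ, n, c)`, so `ψ` is a total
function with a computably enumerable graph, hence computable.
-/

section Cylinders

@[simp]
lemma seg_length (X : ℕ → Bool) (n : ℕ) : (seg X n).length = n := by simp [seg]

@[simp]
lemma seg_getElem (X : ℕ → Bool) {n i : ℕ} (h : i < (seg X n).length) : (seg X n)[i] = X i := by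
  simp [seg]

lemma seg_succ (X : ℕ → Bool) (n : ℕ) : seg X (n + 1) = seg X n ++ [X n] := by
  simp [seg, List.range_succ]

lemma seg_take (X : ℕ → Bool) {m n : ℕ} (h : m ≤ n) : (seg X n).take m = seg X m := by
  simp [seg, ← List.map_take, List.take_range, Nat.min_eq_left h]

lemma seg_prefix_seg (X : ℕ → Bool) {m n : ℕ} (h : m ≤ n) : seg X m <+: seg X n :=
  seg_take X h ▸ List.take_prefix m _

lemma exists_seg_eq (l : List Bool) : ∃ X, seg X l.length = l :=
  ⟨fun i => l.getD i false, List.ext_getElem (by simp) fun i _ hi => by simp [hi]⟩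

lemma mem_cyl_iff_prefix_seg {X : ℕ → Bool} {u : List Bool} {n : ℕ} (h : u.length ≤ n) :
    X ∈ cyl u ↔ u <+: seg X n := by
  rw [List.prefix_iff_eq_take, seg_take X h, eq_comm]
  rfl

lemma mem_cyl_of_prefix {X : ℕ → Bool} {u v : List Bool} (huv : u <+: v) (hX : X ∈ cyl v) :
    X ∈ cyl u :=
  (mem_cyl_iff_prefix_seg huv.length_le).2 (huv.trans ((mem_cyl_iff_prefix_seg le_rfl).1 hX))

lemma prefix_of_mem_cyl {X : ℕ → Bool} {u v : List Bool} (hu : X ∈ cyl u) (hv : X ∈ cyl v)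
    (h : u.length ≤ v.length) : u <+: v :=
  List.prefix_of_prefix_length_le ((mem_cyl_iff_prefix_seg h).1 hu)
    ((mem_cyl_iff_prefix_seg le_rfl).1 hv) h

lemma apply_eq_getElem_of_mem_cyl {X : ℕ → Bool} {u : List Bool} (hX : X ∈ cyl u) {i : ℕ}
    (hi : i < u.length) : X i = u[i] := by
  have hX : seg X u.length = u := hX
  simp [← List.getElem_of_eq hX (by simpa using hi)]

lemma mem_cyl_append_singleton {X : ℕ → Bool} {u : List Bool} {b : Bool} :
    X ∈ cyl (u ++ [b]) ↔ X ∈ cyl u ∧ X u.length = b := by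
  simp only [cyl, Set.mem_ofPred_eq, List.length_append, List.length_singleton, seg_succ,
    List.append_singleton_inj]

end Cylinders

section Computability

variable {α β γ : Type*} [Primcodable α] [Primcodable β] [Primcodable γ]

theorem computable_list_map {f : α → β → γ} {g : α → List β} (hf : Computable₂ f)
    (hg : Computable g) : Computable fun a => (g a).map (f a) := by
  have hstep : Computable₂ fun a (p : ℕ × List γ) => p.2 ++ ((g a)[p.1]?.map (f a)).toList :=
    Computable.list_append.comp (Computable.snd.comp Computable.snd)
      (Primrec.optionToList.to_comp.comp (Computable.option_map
        (Computable.list_getElem?.comp (hg.comp Computable.fst)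
          (Computable.fst.comp Computable.snd))
        (hf.comp (Computable.fst.comp Computable.fst) Computable.snd)))
  refine (Computable.nat_rec (Computable.list_length.comp hg) (Computable.const []) hstep).of_eq
    fun a => ?_
  suffices ∀ k, Nat.rec (motive := fun _ => List γ) []
      (fun k acc => acc ++ ((g a)[k]?.map (f a)).toList) k = ((g a).take k).map (f a) by
    rw [this, List.take_length]
  intro k
  induction k with
  | zero => simp
  | succ k ih =>
    show _ ++ _ = _
    rw [ih, List.take_add_one, List.map_append, Option.toList_map]

theorem computable_of_graph_exists {f : α → β} {p : α → β × ℕ → Bool} (hp : Computable₂ p)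
    (hgraph : ∀ a b, (∃ n, p a (b, n) = true) ↔ f a = b) : Computable f := by
  let F : α → ℕ → Option β := fun a i =>
    (Encodable.decode (α := β × ℕ) i).bind fun q => bif p a q then some q.1 else none
  have hF : Computable₂ F :=
    Computable.option_bind (Computable.decode.comp Computable.snd)
      (Computable.cond (hp.comp (Computable.fst.comp Computable.fst) Computable.snd)
        (Computable.option_some.comp (Computable.fst.comp Computable.snd))
        (Computable.const none))
  refine (Partrec.rfindOpt hF).of_eq_tot fun a => ?_
  obtain ⟨n, hn⟩ := (hgraph a (f a)).2 rfl
  have hdom : (Nat.rfindOpt (F a)).Dom :=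
    Nat.rfindOpt_dom.2 ⟨Encodable.encode (f a, n), f a, by simp [F, hn]⟩
  obtain ⟨i, hi⟩ := Nat.rfindOpt_spec (Part.get_mem hdom)
  suffices (Nat.rfindOpt (F a)).get hdom = f a from this ▸ Part.get_mem hdom
  obtain ⟨q, -, hq⟩ := Option.bind_eq_some_iff.1 hi
  cases hpq : p a q <;> simp only [hpq, cond_false, cond_true, reduceCtorEq, Option.some_inj] at hq
  exact hq ▸ ((hgraph a q.1).1 ⟨q.2, hpq⟩).symm

end Computability

lemma isLocallyConstant_seg (n : ℕ) : IsLocallyConstant fun X : ℕ → Bool => seg X n := by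
  induction n with
  | zero => exact IsLocallyConstant.const []
  | succ n ih =>
    simp only [seg_succ]
    exact ih.comp₂ ((IsLocallyConstant.iff_continuous _).2 (continuous_apply n)) (· ++ [·])

lemma exists_forall_lt_length_seg {φ : List Bool → List Bool}
    (hmono : ∀ σ τ : List Bool, σ <+: τ → φ σ <+: φ τ)
    (hlim : ∀ X : ℕ → Bool, Tendsto (fun n => (φ (seg X n)).length) atTop atTop) (m : ℕ) :
    ∃ N, ∀ X : ℕ → Bool, ∀ n, N ≤ n → m < (φ (seg X n)).length := by
  let U : ℕ → Set (ℕ → Bool) := fun n => {X | m < (φ (seg X n)).length}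
  have hU : Monotone U := fun n k hnk X hX =>
    lt_of_lt_of_le hX (hmono _ _ (seg_prefix_seg X hnk)).length_le
  obtain ⟨N, hN⟩ := isCompact_univ.elim_directed_cover U
    (fun n => isLocallyConstant_seg n {l | m < (φ l).length})
    (fun X _ => Set.mem_iUnion.2 ((hlim X).eventually_gt_atTop m).exists) hU.directed_le
  exact ⟨N, fun X n hn => hU hn (hN (Set.mem_univ X))⟩

def stringsOfLength (n : ℕ) : List (List Bool) :=
  n.rec [[]] fun _ S => S.flatMap fun l => [false :: l, true :: l]

@[simp]
lemma mem_stringsOfLength {n : ℕ} {l : List Bool} : l ∈ stringsOfLength n ↔ l.length = n := by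
  induction n generalizing l with
  | zero => simp [stringsOfLength]
  | succ n ih =>
    show l ∈ (stringsOfLength n).flatMap _ ↔ _
    cases l with
    | nil => simp
    | cons b l => cases b <;> simp [ih]

lemma primrec_stringsOfLength : Primrec stringsOfLength :=
  Primrec.nat_rec' Primrec.id (Primrec.const [[]])
    (Primrec.list_flatMap (Primrec.snd.comp Primrec.snd)
      (Primrec.list_cons.comp (Primrec.list_cons.comp (Primrec.const false) Primrec.snd)
        (Primrec.list_cons.comp (Primrec.list_cons.comp (Primrec.const true) Primrec.snd)
          (Primrec.const []))).to₂).to₂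

def extensionImages (φ : List Bool → List Bool) (σ : List Bool) (n : ℕ) : List (List Bool) :=
  (stringsOfLength n).map fun τ => φ (σ ++ τ)

lemma mem_extensionImages {φ : List Bool → List Bool} {σ u : List Bool} {n : ℕ} :
    u ∈ extensionImages φ σ n ↔ ∃ X ∈ cyl σ, u = φ (seg X (σ.length + n)) := by
  simp only [extensionImages, List.mem_map, mem_stringsOfLength]
  constructor
  · rintro ⟨τ, rfl, rfl⟩
    obtain ⟨X, hX⟩ := exists_seg_eq (σ ++ τ)
    rw [List.length_append] at hX
    exact ⟨X, (mem_cyl_iff_prefix_seg (by simp)).2 (hX ▸ List.prefix_append σ τ), by rw [hX]⟩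
  · rintro ⟨X, hX, rfl⟩
    refine ⟨(seg X (σ.length + n)).drop σ.length, by simp, ?_⟩
    rw [List.prefix_iff_eq_append.1 ((mem_cyl_iff_prefix_seg (by simp)).1 hX)]

lemma computable₂_extensionImages {φ : List Bool → List Bool} (hφ : Computable φ) :
    Computable₂ (extensionImages φ) :=
  computable_list_map
    (hφ.comp (Computable.list_append.comp (Computable.fst.comp Computable.fst)
      Computable.snd)).to₂
    (primrec_stringsOfLength.to_comp.comp Computable.snd)

lemma primrecRel_isPrefix {α : Type*} [Primcodable α] [DecidableEq α] :
    PrimrecRel fun u v : List α => u <+: v :=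
  (Primrec.eq.comp₂ (Primrec.list_take.comp₂ (Primrec.list_length.comp₂ Primrec₂.left)
    Primrec₂.right) Primrec₂.left).of_eq fun _ _ => by rw [List.prefix_iff_eq_take, eq_comm]

def IsBranchingPrefix (S : List (List Bool)) (c : List Bool) : Prop :=
  (∀ u ∈ S, c <+: u) ∧ ∀ b : Bool, ∃ u ∈ S, c ++ [b] <+: u

lemma primrecRel_isBranchingPrefix : PrimrecRel IsBranchingPrefix := by
  have hpre : PrimrecRel fun u c : List Bool => c <+: u :=
    primrecRel_isPrefix.comp₂ Primrec₂.right Primrec₂.left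
  have hext (b : Bool) : PrimrecRel fun (S : List (List Bool)) c => ∃ u ∈ S, c ++ [b] <+: u :=
    hpre.exists_mem_list.comp₂ Primrec₂.left
      (Primrec.list_concat.comp₂ Primrec₂.right (Primrec₂.const b))
  exact (PrimrecPred.and hpre.forall_mem_list (PrimrecPred.and (hext false) (hext true))).of_eq
    fun _ => by simp [IsBranchingPrefix, Bool.forall_bool]

section Generator

variable {φ : List Bool → List Bool} {Φ : (ℕ → Bool) → (ℕ → Bool)} {ψ : List Bool → List Bool}

lemma eq_of_isBranchingPrefix
    (hΦ : ∀ (X : ℕ → Bool) (n : ℕ), seg (Φ X) (φ (seg X n)).length = φ (seg X n))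
    (hψcommon : ∀ σ : List Bool, ∀ X ∈ cyl σ, seg (Φ X) (ψ σ).length = ψ σ)
    (hψlongest : ∀ σ τ : List Bool, (∀ X ∈ cyl σ, seg (Φ X) τ.length = τ) → τ <+: ψ σ)
    {σ c : List Bool} {n : ℕ} (h : IsBranchingPrefix (extensionImages φ σ n) c) : c = ψ σ := by
  obtain ⟨hcommon, hbranch⟩ := h
  have hc : c <+: ψ σ := hψlongest σ c fun X hX =>
    mem_cyl_of_prefix (hcommon _ (mem_extensionImages.2 ⟨X, hX, rfl⟩)) (hΦ X _)
  refine hc.eq_of_length_le (not_lt.1 fun hlt => ?_)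
  have hread (b : Bool) : (ψ σ)[c.length] = b := by
    obtain ⟨u, hu, hcu⟩ := hbranch b
    obtain ⟨X, hX, rfl⟩ := mem_extensionImages.1 hu
    rw [← (mem_cyl_append_singleton.1 (mem_cyl_of_prefix hcu (hΦ X _))).2,
      apply_eq_getElem_of_mem_cyl (hψcommon σ X hX) hlt]
  exact Bool.false_ne_true ((hread false).symm.trans (hread true))

lemma exists_isBranchingPrefix_extensionImages
    (hmono : ∀ σ τ : List Bool, σ <+: τ → φ σ <+: φ τ)
    (hlim : ∀ X : ℕ → Bool, Tendsto (fun n => (φ (seg X n)).length) atTop atTop)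
    (hΦ : ∀ (X : ℕ → Bool) (n : ℕ), seg (Φ X) (φ (seg X n)).length = φ (seg X n))
    (hnc : ∀ σ : List Bool, ∃ X ∈ cyl σ, ∃ Y ∈ cyl σ, Φ X ≠ Φ Y)
    (hψcommon : ∀ σ : List Bool, ∀ X ∈ cyl σ, seg (Φ X) (ψ σ).length = ψ σ)
    (hψlongest : ∀ σ τ : List Bool, (∀ X ∈ cyl σ, seg (Φ X) τ.length = τ) → τ <+: ψ σ)
    (σ : List Bool) : ∃ n, IsBranchingPrefix (extensionImages φ σ n) (ψ σ) := by
  obtain ⟨X, hX, Y, hY, hXY⟩ := hnc σ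
  obtain ⟨m, hm⟩ := Function.ne_iff.1 hXY
  have hψm : (ψ σ).length ≤ m := not_lt.1 fun h => hm <|
    (apply_eq_getElem_of_mem_cyl (hψcommon σ X hX) h).trans
      (apply_eq_getElem_of_mem_cyl (hψcommon σ Y hY) h).symm
  obtain ⟨N, hN⟩ := exists_forall_lt_length_seg hmono hlim m
  have hlong (Z : ℕ → Bool) (v : List Bool) (hv : Φ Z ∈ cyl v) (hlen : v.length ≤ m + 1) :
      v <+: φ (seg Z (σ.length + N)) :=
    prefix_of_mem_cyl hv (hΦ Z _) (hlen.trans (hN Z _ (Nat.le_add_left N _)))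
  refine ⟨N, fun u hu => ?_, fun b => ?_⟩
  · obtain ⟨Z, hZ, rfl⟩ := mem_extensionImages.1 hu
    exact hlong Z _ (hψcommon σ Z hZ) (by omega)
  · have hnot : ¬ψ σ ++ [!b] <+: ψ σ := fun h => by simpa using h.length_le
    obtain ⟨Z, hZ, hZb⟩ : ∃ Z ∈ cyl σ, Φ Z ∉ cyl (ψ σ ++ [!b]) := by
      by_contra! h
      exact hnot (hψlongest σ _ h)
    have hZψ : Φ Z ∈ cyl (ψ σ) := hψcommon σ Z hZ
    have hZb' : Φ Z ∈ cyl (ψ σ ++ [b]) :=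
      mem_cyl_append_singleton.2 ⟨hZψ, by simpa [mem_cyl_append_singleton, hZψ] using hZb⟩
    exact ⟨_, mem_extensionImages.2 ⟨Z, hZ, rfl⟩, hlong Z _ hZb' (by simp; omega)⟩

end Generator

/-- If `Φ` is the total functional induced by a computable monotone `φ` (with
`|φ(X↾n)| → ∞` for all `X`), and `Φ` is nowhere constant, then the canonical
generator `ψ` of `Φ` (`ψ σ` is the longest common initial segment of
`{Φ X : X ∈ ⟦σ⟧}`) is computable. -/
theorem stmt3 (φ : List Bool → List Bool) (hφ : Computable φ)
    (hmono : ∀ σ τ : List Bool, σ <+: τ → φ σ <+: φ τ)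
    (hlim : ∀ X : ℕ → Bool,
      Tendsto (fun n => (φ (seg X n)).length) atTop atTop)
    (Φ : (ℕ → Bool) → (ℕ → Bool))
    (hΦ : ∀ (X : ℕ → Bool) (n : ℕ), seg (Φ X) (φ (seg X n)).length = φ (seg X n))
    (hnc : ∀ σ : List Bool, ∃ X ∈ cyl σ, ∃ Y ∈ cyl σ, Φ X ≠ Φ Y)
    (ψ : List Bool → List Bool)
    (hψcommon : ∀ σ : List Bool, ∀ X ∈ cyl σ, seg (Φ X) (ψ σ).length = ψ σ)
    (hψlongest : ∀ σ τ : List Bool,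
      (∀ X ∈ cyl σ, seg (Φ X) τ.length = τ) → τ <+: ψ σ) :
    Computable ψ := by
  classical
  refine computable_of_graph_exists
    (p := fun σ q => decide (IsBranchingPrefix (extensionImages φ σ q.2) q.1))
    (primrecRel_isBranchingPrefix.decide.to_comp.comp
      ((computable₂_extensionImages hφ).comp Computable.fst (Computable.snd.comp Computable.snd))
      (Computable.fst.comp Computable.snd)) fun σ c => ?_
  simp only [decide_eq_true_eq]
  constructor
  · rintro ⟨n, hn⟩
    exact (eq_of_isBranchingPrefix hΦ hψcommon hψlongest hn).symm
  · rintro rfl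
    exact exists_isBranchingPrefix_extensionImages hmono hlim hΦ hnc hψcommon hψlongest σ
end

section
/- Let D ⊆ 2^{<ω} be a prefix-free set of nonempty binary strings with Σ_{σ∈D} 2^{-|σ|} = 1 and AvgRT(D) = Σ_{σ∈D} |σ|·2^{-|σ|} < ∞. Then for λ-almost every X ∈ 2^ω, writing X = σ₁⌢σ₂⌢σ₃⌢⋯ with all σ_i ∈ D (such a decomposition exists and is unique λ-almost surely) and setting n_k = |σ₁| + ⋯ + |σ_k|, one has n_k/k → AvgRT(D) as k → ∞. -/
open Filter MeasureTheory

/-- `D ⊆ 2^{<ω}` is prefix-free: no element is a proper initial segment of another. -/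
def PrefixFree (D : Set (List Bool)) : Prop :=
  ∀ σ ∈ D, ∀ τ ∈ D, σ <+: τ → σ = τ

/-- The average running time `AvgRT(D) = Σ_{σ∈D} |σ|·2^{-|σ|}` of the DDG-tree
with terminal set `D`. -/
noncomputable def AvgRT (D : Set (List Bool)) : ℝ :=
  ∑' σ : D, ((σ : List Bool).length : ℝ) * ((1 : ℝ) / 2) ^ (σ : List Bool).length

/-!
Cut `X` into consecutive blocks from `D`: `blockLen D X` is the length of the first block and
`dropBlock D X` what remains after it. Because `D` is prefix-free and its cylinders have total
measure one, the first block exists almost surely, and given that it equals `σ`, the remainder is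
again uniformly distributed. Hence `dropBlock D` preserves `λ` and is independent of `blockLen D`,
so the successive block lengths `blockLen D ∘ (dropBlock D)^[i]` are i.i.d. with mean `AvgRT D`,
and the strong law of large numbers gives `n_k / k → AvgRT D`.
-/

open ProbabilityTheory
open scoped ENNReal

section IterateIndep

variable {Ω β : Type*} [MeasurableSpace Ω] [MeasurableSpace β] {μ : Measure Ω}
  {T : Ω → Ω} {f : Ω → β}

theorem ProbabilityTheory.IndepFun.comp_measurePreserving {γ : Type*} [MeasurableSpace γ]
    {g : Ω → γ} (hfg : f ⟂ᵢ[μ] g) (hf : Measurable f) (hg : Measurable g)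
    (hT : MeasurePreserving T μ μ) : (f ∘ T) ⟂ᵢ[μ] (g ∘ T) := by
  rw [indepFun_iff_measure_inter_preimage_eq_mul] at hfg ⊢
  intro s t hs ht
  rw [Set.preimage_comp, Set.preimage_comp, ← Set.preimage_inter,
    hT.measure_preimage ((hf hs).inter (hg ht)).nullMeasurableSet,
    hT.measure_preimage (hf hs).nullMeasurableSet,
    hT.measure_preimage (hg ht).nullMeasurableSet, hfg s t hs ht]

theorem identDistrib_comp_iterate (hT : MeasurePreserving T μ μ) (hf : Measurable f) (i : ℕ) :
    IdentDistrib (f ∘ T^[i]) f μ μ where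
  aemeasurable_fst := (hf.comp (hT.iterate i).measurable).aemeasurable
  aemeasurable_snd := hf.aemeasurable
  map_eq := by rw [← Measure.map_map hf (hT.iterate i).measurable, (hT.iterate i).map_eq]

theorem indepFun_comp_iterate (hT : MeasurePreserving T μ μ) (hf : Measurable f)
    (hfT : f ⟂ᵢ[μ] T) {i j : ℕ} (hij : i < j) : (f ∘ T^[i]) ⟂ᵢ[μ] (f ∘ T^[j]) := by
  obtain ⟨k, rfl⟩ := Nat.exists_eq_add_of_lt hij
  have h0 : f ⟂ᵢ[μ] (f ∘ T^[k + 1]) := by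
    rw [Function.iterate_succ, ← Function.comp_assoc]
    exact hfT.comp measurable_id (hf.comp (hT.iterate k).measurable)
  rw [add_assoc, add_comm, Function.iterate_add, ← Function.comp_assoc]
  exact h0.comp_measurePreserving hf (hf.comp (hT.iterate _).measurable) (hT.iterate i)

/-- The values `f ∘ T^[i]` are i.i.d., so this is the strong law of large numbers. -/
theorem strong_law_comp_iterate {f : Ω → ℝ} (hT : MeasurePreserving T μ μ)
    (hf : Measurable f) (hfT : f ⟂ᵢ[μ] T) (hint : Integrable f μ) :
    ∀ᵐ ω ∂μ, Tendsto (fun n : ℕ => (∑ i ∈ Finset.range n, f (T^[i] ω)) / n) atTop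
      (nhds (∫ ω, f ω ∂μ)) := by
  refine strong_law_ae_real (fun i => f ∘ T^[i]) hint ?_ (identDistrib_comp_iterate hT hf)
  intro i j hij
  rcases hij.lt_or_gt with h | h
  · exact indepFun_comp_iterate hT hf hfT h
  · exact (indepFun_comp_iterate hT hf hfT h).symm

end IterateIndep

namespace Cantor

def shift (n : ℕ) (X : ℕ → Bool) : ℕ → Bool := fun i => X (n + i)

theorem measurable_shift (n : ℕ) : Measurable (shift n) :=
  measurable_pi_lambda _ fun _ => measurable_pi_apply _

theorem seg_add (X : ℕ → Bool) (m n : ℕ) : seg X (m + n) = seg X m ++ seg (shift m X) n := by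
  simp [seg, List.range_add, shift, Function.comp_def]

@[simp] theorem length_seg (X : ℕ → Bool) (n : ℕ) : (seg X n).length = n := by
  simp [seg]

theorem seg_succ (X : ℕ → Bool) (n : ℕ) : seg X (n + 1) = seg X n ++ [X n] := by
  simp [seg, List.range_succ]

theorem mem_cyl_iff {X : ℕ → Bool} {σ : List Bool} :
    X ∈ cyl σ ↔ ∀ i (hi : i < σ.length), X i = σ[i] := by
  simp only [cyl, Set.mem_ofPred_eq, List.ext_getElem_iff, length_seg, true_and]
  simp [seg]

theorem measurableSet_cyl (σ : List Bool) : MeasurableSet (cyl σ) := by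
  have : cyl σ = ⋂ i : Fin σ.length, {X | X i = σ[i]} := by
    ext X
    simp [mem_cyl_iff, Fin.forall_iff]
  rw [this]
  exact .iInter fun i => measurable_pi_apply _ (measurableSet_singleton _)

theorem cyl_append (σ τ : List Bool) :
    cyl (σ ++ τ) = cyl σ ∩ shift σ.length ⁻¹' cyl τ := by
  ext X
  simp only [cyl, Set.mem_ofPred_eq, Set.mem_inter_iff, Set.mem_preimage, List.length_append,
    seg_add]
  exact ⟨fun h => List.append_inj h (by simp), fun ⟨h₁, h₂⟩ => by rw [h₁, h₂]⟩

theorem prefix_of_mem_cyl {X : ℕ → Bool} {σ : List Bool} {n : ℕ} (hX : X ∈ cyl σ)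
    (hn : σ.length ≤ n) : σ <+: seg X n := by
  rw [← hX, ← Nat.add_sub_cancel' hn, seg_add]
  exact List.prefix_append _ _

theorem prefix_or_prefix_of_mem_cyl {X : ℕ → Bool} {σ τ : List Bool} (hσ : X ∈ cyl σ)
    (hτ : X ∈ cyl τ) : σ <+: τ ∨ τ <+: σ :=
  List.prefix_or_prefix_of_prefix (prefix_of_mem_cyl hσ (le_max_left _ τ.length))
    (prefix_of_mem_cyl hτ (le_max_right σ.length _))

theorem cyl_subset_cyl {σ τ : List Bool} (h : σ <+: τ) : cyl τ ⊆ cyl σ := by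
  obtain ⟨ρ, rfl⟩ := h
  rw [cyl_append]
  exact Set.inter_subset_left

theorem isPiSystem_range_cyl : IsPiSystem (Set.range cyl) := by
  rintro _ ⟨σ, rfl⟩ _ ⟨τ, rfl⟩ ⟨X, hσ, hτ⟩
  rcases prefix_or_prefix_of_mem_cyl hσ hτ with h | h
  · exact ⟨τ, (Set.inter_eq_right.2 (cyl_subset_cyl h)).symm⟩
  · exact ⟨σ, (Set.inter_eq_left.2 (cyl_subset_cyl h)).symm⟩

theorem preimage_eval_singleton_eq_iUnion_cyl (i : ℕ) (b : Bool) :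
    (fun X : ℕ → Bool => X i) ⁻¹' {b} =
      ⋃ τ ∈ {τ : List Bool | τ.length = i}, cyl (τ ++ [b]) := by
  ext X
  simp only [Set.mem_preimage, Set.mem_singleton_iff, Set.mem_iUnion, Set.mem_ofPred_eq,
    exists_prop, cyl, List.length_append, List.length_singleton]
  constructor
  · rintro rfl
    exact ⟨seg X i, length_seg X i, by rw [length_seg, seg_succ]⟩
  · rintro ⟨τ, rfl, hX⟩
    rw [seg_succ] at hX
    simpa using (List.append_inj' hX rfl).2

theorem generateFrom_range_cyl :
    MeasurableSpace.generateFrom (Set.range cyl) =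
      (inferInstance : MeasurableSpace (ℕ → Bool)) := by
  refine le_antisymm (MeasurableSpace.generateFrom_le ?_) ?_
  · rintro _ ⟨σ, rfl⟩
    exact measurableSet_cyl σ
  · refine iSup_le fun i => MeasurableSpace.comap_le_iff_le_map.2 fun s _ => ?_
    rw [MeasurableSpace.map_def, ← Set.biUnion_of_singleton s, Set.preimage_iUnion₂]
    refine .biUnion (Set.to_countable _) fun b _ => ?_
    rw [preimage_eval_singleton_eq_iUnion_cyl]
    exact .biUnion (Set.to_countable _) fun τ _ =>
      MeasurableSpace.measurableSet_generateFrom ⟨_, rfl⟩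

section UniformMeasure

variable {lam : Measure (ℕ → Bool)} [IsProbabilityMeasure lam]

theorem map_shift_restrict_cyl
    (hlam : ∀ σ : List Bool, lam (cyl σ) = (1 / 2 : ℝ≥0∞) ^ σ.length) (τ : List Bool) :
    (lam.restrict (cyl τ)).map (shift τ.length) = (1 / 2 : ℝ≥0∞) ^ τ.length • lam := by
  refine ext_of_generate_finite _ generateFrom_range_cyl.symm isPiSystem_range_cyl ?_ ?_
  · rintro _ ⟨σ, rfl⟩
    rw [Measure.map_apply (measurable_shift _) (measurableSet_cyl σ),
      Measure.restrict_apply (measurable_shift _ (measurableSet_cyl σ)), Set.inter_comm,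
      ← cyl_append, Measure.smul_apply, smul_eq_mul, hlam, hlam, List.length_append, pow_add]
  · rw [Measure.map_apply (measurable_shift _) MeasurableSet.univ, Set.preimage_univ,
      Measure.restrict_apply_univ, Measure.smul_apply, measure_univ, hlam, smul_eq_mul, mul_one]

theorem measure_cyl_inter_shift_preimage
    (hlam : ∀ σ : List Bool, lam (cyl σ) = (1 / 2 : ℝ≥0∞) ^ σ.length) (τ : List Bool)
    {E : Set (ℕ → Bool)} (hE : MeasurableSet E) :
    lam (cyl τ ∩ shift τ.length ⁻¹' E) = (1 / 2 : ℝ≥0∞) ^ τ.length * lam E := by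
  have h := congrArg (· E) (map_shift_restrict_cyl hlam τ)
  simp only [Measure.map_apply (measurable_shift _) hE, Measure.restrict_apply
    (measurable_shift _ hE), Measure.smul_apply, smul_eq_mul] at h
  rw [Set.inter_comm, h]

end UniformMeasure

theorem mem_cyl_head {X : ℕ → Bool} {B : ℕ → List Bool}
    (hX : ∀ k, seg X ((List.range k).map B).flatten.length = ((List.range k).map B).flatten) :
    X ∈ cyl (B 0) := by
  simpa [cyl] using hX 1

theorem seg_shift_flatten_tail {X : ℕ → Bool} {B : ℕ → List Bool}
    (hX : ∀ k, seg X ((List.range k).map B).flatten.length = ((List.range k).map B).flatten)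
    (k : ℕ) :
    seg (shift (B 0).length X) ((List.range k).map (fun i => B (i + 1))).flatten.length =
      ((List.range k).map (fun i => B (i + 1))).flatten := by
  have h := hX (k + 1)
  rw [List.range_succ_eq_map, List.map_cons, List.map_map, List.flatten_cons,
    List.length_append, seg_add] at h
  exact (List.append_inj h (length_seg _ _)).2

end Cantor

open Cantor

section BlockDecomposition

variable {D : Set (List Bool)}

theorem PrefixFree.eq_of_mem_cyl (hpf : PrefixFree D) {σ τ : List Bool} (hσ : σ ∈ D)
    (hτ : τ ∈ D) {X : ℕ → Bool} (hXσ : X ∈ cyl σ) (hXτ : X ∈ cyl τ) : σ = τ := by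
  rcases prefix_or_prefix_of_mem_cyl hXσ hXτ with h | h
  · exact hpf σ hσ τ hτ h
  · exact (hpf τ hτ σ hσ h).symm

theorem PrefixFree.pairwise_disjoint_cyl (hpf : PrefixFree D) :
    Pairwise (Function.onFun Disjoint fun σ : D => cyl σ) := fun σ τ hστ =>
  Set.disjoint_left.2 fun _ hσ hτ => hστ (Subtype.ext (hpf.eq_of_mem_cyl σ.2 τ.2 hσ hτ))

variable (D) in
/-- The length of the block of `D` that `X` starts with; it is `0` when there is none. -/
noncomputable def blockLen (X : ℕ → Bool) : ℕ :=
  sInf {n | ∃ σ ∈ D, σ.length = n ∧ X ∈ cyl σ}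

variable (D) in
noncomputable def dropBlock (X : ℕ → Bool) : ℕ → Bool :=
  shift (blockLen D X) X

theorem PrefixFree.blockLen_eq (hpf : PrefixFree D) {σ : List Bool} (hσ : σ ∈ D)
    {X : ℕ → Bool} (hX : X ∈ cyl σ) : blockLen D X = σ.length := by
  have : {n | ∃ τ ∈ D, τ.length = n ∧ X ∈ cyl τ} = {σ.length} := by
    ext n
    constructor
    · rintro ⟨τ, hτ, rfl, hXτ⟩
      rw [hpf.eq_of_mem_cyl hτ hσ hXτ hX, Set.mem_singleton_iff]
    · rintro rfl
      exact ⟨σ, hσ, rfl, hX⟩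
  rw [blockLen, this, csInf_singleton]

theorem blockLen_eq_zero {X : ℕ → Bool} (hX : ∀ σ ∈ D, X ∉ cyl σ) :
    blockLen D X = 0 := by
  have : {n | ∃ σ ∈ D, σ.length = n ∧ X ∈ cyl σ} = ∅ :=
    Set.eq_empty_of_forall_notMem fun _ ⟨σ, hσ, _, hXσ⟩ => hX σ hσ hXσ
  rw [blockLen, this, Nat.sInf_empty]

theorem PrefixFree.blockLen_eq_tsum_indicator (hpf : PrefixFree D) (X : ℕ → Bool) :
    (blockLen D X : ℝ≥0∞) =
      ∑' σ : D, (cyl σ).indicator (fun _ => ((σ : List Bool).length : ℝ≥0∞)) X := by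
  by_cases h : ∃ σ : D, X ∈ cyl σ
  · obtain ⟨σ, hσ⟩ := h
    rw [tsum_eq_single σ fun τ hτ => Set.indicator_of_notMem
      (fun hXτ => hτ (Subtype.ext (hpf.eq_of_mem_cyl τ.2 σ.2 hXτ hσ))) _,
      Set.indicator_of_mem hσ, hpf.blockLen_eq σ.2 hσ]
  · push Not at h
    rw [blockLen_eq_zero fun σ hσ => h ⟨σ, hσ⟩]
    simp [Set.indicator_of_notMem (h _)]

theorem PrefixFree.measurable_blockLen (hpf : PrefixFree D) : Measurable (blockLen D) := by
  have hmeas : Measurable fun X => (blockLen D X : ℝ≥0∞) := by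
    simp_rw [hpf.blockLen_eq_tsum_indicator]
    exact .tsum fun σ => measurable_const.indicator (measurableSet_cyl _)
  refine measurable_to_countable' fun n => ?_
  have : blockLen D ⁻¹' {n} =
      (fun X => (blockLen D X : ℝ≥0∞)) ⁻¹' {(n : ℝ≥0∞)} := by
    ext X
    simp
  rw [this]
  exact hmeas (measurableSet_singleton _)

theorem PrefixFree.measurable_dropBlock (hpf : PrefixFree D) : Measurable (dropBlock D) :=
  (measurable_from_prod_countable_left (f := fun p : (ℕ → Bool) × ℕ => shift p.2 p.1)
    measurable_shift).comp (measurable_id.prodMk hpf.measurable_blockLen)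

theorem PrefixFree.blockLen_iterate_dropBlock (hpf : PrefixFree D) {B : ℕ → List Bool}
    (hB : ∀ i, B i ∈ D) {X : ℕ → Bool}
    (hX : ∀ k, seg X ((List.range k).map B).flatten.length = ((List.range k).map B).flatten)
    (i : ℕ) : blockLen D ((dropBlock D)^[i] X) = (B i).length := by
  induction i generalizing X B with
  | zero => exact hpf.blockLen_eq (hB 0) (mem_cyl_head hX)
  | succ i ih =>
    rw [Function.iterate_succ_apply, dropBlock, hpf.blockLen_eq (hB 0) (mem_cyl_head hX)]
    exact ih (fun i => hB (i + 1)) (seg_shift_flatten_tail hX)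

section UniformMeasure

variable {lam : Measure (ℕ → Bool)}

theorem PrefixFree.measure_compl_iUnion_cyl [IsProbabilityMeasure lam] (hpf : PrefixFree D)
    (hsum : ∑' σ : D, (1 / 2 : ℝ≥0∞) ^ (σ : List Bool).length = 1)
    (hlam : ∀ σ : List Bool, lam (cyl σ) = (1 / 2 : ℝ≥0∞) ^ σ.length) :
    lam (⋃ σ : D, cyl σ)ᶜ = 0 := by
  rw [measure_compl (.iUnion fun σ => measurableSet_cyl _) (measure_ne_top _ _),
    measure_iUnion hpf.pairwise_disjoint_cyl fun σ => measurableSet_cyl _, measure_univ]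
  simp_rw [hlam]
  rw [hsum, tsub_self]

theorem PrefixFree.measure_blockLen_preimage_inter_dropBlock_preimage [IsProbabilityMeasure lam]
    (hpf : PrefixFree D)
    (hsum : ∑' σ : D, (1 / 2 : ℝ≥0∞) ^ (σ : List Bool).length = 1)
    (hlam : ∀ σ : List Bool, lam (cyl σ) = (1 / 2 : ℝ≥0∞) ^ σ.length)
    (A : Set ℕ) {E : Set (ℕ → Bool)} (hE : MeasurableSet E) :
    lam (blockLen D ⁻¹' A ∩ dropBlock D ⁻¹' E) =
      (∑' σ : D, A.indicator (fun n => (1 / 2 : ℝ≥0∞) ^ n) (σ : List Bool).length) *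
        lam E := by
  set S := blockLen D ⁻¹' A ∩ dropBlock D ⁻¹' E
  have hS : MeasurableSet S :=
    (hpf.measurable_blockLen (Set.to_countable A).measurableSet).inter (hpf.measurable_dropBlock hE)
  have hpiece (σ : D) : lam (S ∩ cyl σ) =
      A.indicator (fun n => (1 / 2 : ℝ≥0∞) ^ n) (σ : List Bool).length * lam E := by
    have hcyl : ∀ X ∈ cyl σ, blockLen D X = (σ : List Bool).length := fun X hX =>
      hpf.blockLen_eq σ.2 hX
    by_cases hA : (σ : List Bool).length ∈ A
    · have : S ∩ cyl σ = cyl σ ∩ shift (σ : List Bool).length ⁻¹' E := by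
        ext X
        constructor
        · rintro ⟨⟨-, hXE⟩, hX⟩
          exact ⟨hX, by rwa [Set.mem_preimage, dropBlock, hcyl X hX] at hXE⟩
        · rintro ⟨hX, hXE⟩
          refine ⟨⟨?_, ?_⟩, hX⟩
          · rwa [Set.mem_preimage, hcyl X hX]
          · rwa [Set.mem_preimage, dropBlock, hcyl X hX]
      rw [this, measure_cyl_inter_shift_preimage hlam _ hE, Set.indicator_of_mem hA]
    · have : S ∩ cyl σ = ∅ :=
        Set.eq_empty_of_forall_notMem fun X ⟨⟨hXA, _⟩, hX⟩ => hA (hcyl X hX ▸ hXA)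
      rw [this, measure_empty, Set.indicator_of_notMem hA, zero_mul]
  calc lam S = lam (S ∩ ⋃ σ : D, cyl σ) :=
        (measure_inter_conull (hpf.measure_compl_iUnion_cyl hsum hlam)).symm
    _ = ∑' σ : D, lam (S ∩ cyl σ) := by
        rw [Set.inter_iUnion, measure_iUnion (fun σ τ hστ =>
          (hpf.pairwise_disjoint_cyl hστ).mono Set.inter_subset_right Set.inter_subset_right)
          fun σ => hS.inter (measurableSet_cyl _)]
    _ = _ := by rw [tsum_congr hpiece, ENNReal.tsum_mul_right]

theorem PrefixFree.measurePreserving_dropBlock [IsProbabilityMeasure lam] (hpf : PrefixFree D)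
    (hsum : ∑' σ : D, (1 / 2 : ℝ≥0∞) ^ (σ : List Bool).length = 1)
    (hlam : ∀ σ : List Bool, lam (cyl σ) = (1 / 2 : ℝ≥0∞) ^ σ.length) :
    MeasurePreserving (dropBlock D) lam lam := by
  refine ⟨hpf.measurable_dropBlock, Measure.ext fun E hE => ?_⟩
  have h := hpf.measure_blockLen_preimage_inter_dropBlock_preimage hsum hlam Set.univ hE
  simp only [Set.preimage_univ, Set.univ_inter, Set.indicator_univ, hsum, one_mul] at h
  rw [Measure.map_apply hpf.measurable_dropBlock hE, h]

theorem PrefixFree.indepFun_blockLen_dropBlock [IsProbabilityMeasure lam] (hpf : PrefixFree D)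
    (hsum : ∑' σ : D, (1 / 2 : ℝ≥0∞) ^ (σ : List Bool).length = 1)
    (hlam : ∀ σ : List Bool, lam (cyl σ) = (1 / 2 : ℝ≥0∞) ^ σ.length) :
    blockLen D ⟂ᵢ[lam] dropBlock D := by
  rw [indepFun_iff_measure_inter_preimage_eq_mul]
  intro A E _ hE
  have hA := hpf.measure_blockLen_preimage_inter_dropBlock_preimage hsum hlam A MeasurableSet.univ
  rw [Set.preimage_univ, Set.inter_univ, measure_univ, mul_one] at hA
  rw [hpf.measure_blockLen_preimage_inter_dropBlock_preimage hsum hlam A hE, hA,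
    (hpf.measurePreserving_dropBlock hsum hlam).measure_preimage hE.nullMeasurableSet]

theorem PrefixFree.lintegral_blockLen (hpf : PrefixFree D)
    (hlam : ∀ σ : List Bool, lam (cyl σ) = (1 / 2 : ℝ≥0∞) ^ σ.length) :
    ∫⁻ X, (blockLen D X : ℝ≥0∞) ∂lam =
      ∑' σ : D,
        ((σ : List Bool).length : ℝ≥0∞) * (1 / 2 : ℝ≥0∞) ^ (σ : List Bool).length := by
  simp_rw [hpf.blockLen_eq_tsum_indicator]
  rw [lintegral_tsum fun σ => (measurable_const.indicator (measurableSet_cyl _)).aemeasurable]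
  simp_rw [lintegral_indicator_const (measurableSet_cyl _), hlam]

end UniformMeasure

theorem ENNReal.tsum_ofReal_mul_half_pow {ι : Type*} (a : ι → ℝ) (n : ι → ℕ)
    (ha : ∀ i, 0 ≤ a i) (hs : Summable fun i => a i * (1 / 2 : ℝ) ^ n i) :
    ∑' i, ENNReal.ofReal (a i) * (1 / 2 : ℝ≥0∞) ^ n i =
      ENNReal.ofReal (∑' i, a i * (1 / 2 : ℝ) ^ n i) := by
  rw [ENNReal.ofReal_tsum_of_nonneg (fun i => by have := ha i; positivity) hs]
  congr! with i
  rw [ENNReal.ofReal_mul (ha i), ENNReal.ofReal_pow (by norm_num), ENNReal.ofReal_div_of_pos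
    (by norm_num), ENNReal.ofReal_one, ENNReal.ofReal_ofNat]

theorem ENNReal.tsum_half_pow_eq_one {ι : Type*} {n : ι → ℕ}
    (h : ∑' i, (1 / 2 : ℝ) ^ n i = 1) : ∑' i, (1 / 2 : ℝ≥0∞) ^ n i = 1 := by
  have hs : Summable fun i => (1 / 2 : ℝ) ^ n i := by
    by_contra hs
    rw [tsum_eq_zero_of_not_summable hs] at h
    exact zero_ne_one h
  have := ENNReal.tsum_ofReal_mul_half_pow (fun _ => 1) n (fun _ => zero_le_one)
    (by simpa only [one_mul] using hs)
  simpa only [ENNReal.ofReal_one, one_mul, h] using this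

theorem PrefixFree.integral_blockLen {lam : Measure (ℕ → Bool)} (hpf : PrefixFree D)
    (hfin : Summable (fun σ : D =>
      ((σ : List Bool).length : ℝ) * ((1 : ℝ) / 2) ^ (σ : List Bool).length))
    (hlam : ∀ σ : List Bool, lam (cyl σ) = (1 / 2 : ℝ≥0∞) ^ σ.length) :
    Integrable (fun X => (blockLen D X : ℝ)) lam ∧
      ∫ X, (blockLen D X : ℝ) ∂lam = AvgRT D := by
  have hmeas : Measurable fun X => (blockLen D X : ℝ) :=
    measurable_from_top.comp hpf.measurable_blockLen
  have hlint : ∫⁻ X, ENNReal.ofReal (blockLen D X) ∂lam = ENNReal.ofReal (AvgRT D) := by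
    rw [AvgRT, ← ENNReal.tsum_ofReal_mul_half_pow _ _ (fun _ => Nat.cast_nonneg _) hfin]
    simp only [ENNReal.ofReal_natCast]
    exact hpf.lintegral_blockLen hlam
  have hnonneg : 0 ≤ AvgRT D := tsum_nonneg fun _ => by positivity
  refine ⟨⟨hmeas.aestronglyMeasurable, ?_⟩, ?_⟩
  · rw [hasFiniteIntegral_iff_ofReal (.of_forall fun _ => Nat.cast_nonneg _), hlint]
    exact ENNReal.ofReal_lt_top
  · rw [integral_eq_lintegral_of_nonneg_ae (.of_forall fun _ => Nat.cast_nonneg _)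
      hmeas.aestronglyMeasurable, hlint, ENNReal.toReal_ofReal hnonneg]

end BlockDecomposition

theorem stmt13_general (D : Set (List Bool))
    (hpf : PrefixFree D)
    (hsum : ∑' σ : D, ((1 : ℝ) / 2) ^ (σ : List Bool).length = 1)
    (hfin : Summable (fun σ : D =>
      ((σ : List Bool).length : ℝ) * ((1 : ℝ) / 2) ^ (σ : List Bool).length))
    (lam : Measure (ℕ → Bool)) [IsProbabilityMeasure lam]
    (hlam : ∀ σ : List Bool, lam (cyl σ) = (1 / 2 : ENNReal) ^ σ.length) :
    ∀ᵐ X ∂lam, ∀ B : ℕ → List Bool,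
      (∀ i, B i ∈ D) →
      (∀ k : ℕ, seg X (((List.range k).map B).flatten).length =
        ((List.range k).map B).flatten) →
      Tendsto (fun k : ℕ => ((∑ i ∈ Finset.range k, (B i).length : ℕ) : ℝ) / k)
        atTop (nhds (AvgRT D)) := by
  have hsumE : ∑' σ : D, (1 / 2 : ℝ≥0∞) ^ (σ : List Bool).length = 1 :=
    ENNReal.tsum_half_pow_eq_one hsum
  obtain ⟨hint, hmean⟩ := hpf.integral_blockLen hfin hlam
  have hslln := strong_law_comp_iterate (f := fun X => (blockLen D X : ℝ))
    (hpf.measurePreserving_dropBlock hsumE hlam)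
    (measurable_from_top.comp hpf.measurable_blockLen)
    ((hpf.indepFun_blockLen_dropBlock hsumE hlam).comp measurable_from_top measurable_id) hint
  rw [hmean] at hslln
  filter_upwards [hslln] with X hX B hB hXB
  simpa only [Nat.cast_sum, hpf.blockLen_iterate_dropBlock hB hXB] using hX

/-- Let `D` be a prefix-free set of nonempty strings with `Σ_{σ∈D} 2^{-|σ|} = 1`
and finite average running time `AvgRT(D)`.  Then for `λ`-a.e. `X`: whenever
`X = σ₁⌢σ₂⌢⋯` with all blocks `σᵢ = B(i) ∈ D`, the partial-sum lengths
`n_k = |σ₁| + ⋯ + |σ_k|` satisfy `n_k / k → AvgRT(D)`. -/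
theorem stmt13 (D : Set (List Bool))
    (hne : ∀ σ ∈ D, σ ≠ ([] : List Bool))
    (hpf : PrefixFree D)
    (hsum : ∑' σ : D, ((1 : ℝ) / 2) ^ (σ : List Bool).length = 1)
    (hfin : Summable (fun σ : D =>
      ((σ : List Bool).length : ℝ) * ((1 : ℝ) / 2) ^ (σ : List Bool).length))
    (lam : Measure (ℕ → Bool)) [IsProbabilityMeasure lam]
    (hlam : ∀ σ : List Bool, lam (cyl σ) = (1 / 2 : ENNReal) ^ σ.length) :
    ∀ᵐ X ∂lam, ∀ B : ℕ → List Bool,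
      (∀ i, B i ∈ D) →
      (∀ k : ℕ, seg X (((List.range k).map B).flatten).length =
        ((List.range k).map B).flatten) →
      Tendsto (fun k : ℕ => ((∑ i ∈ Finset.range k, (B i).length : ℕ) : ℝ) / k)
        atTop (nhds (AvgRT D)) :=
  stmt13_general D hpf hsum hfin lam hlam
end

section
/- Let D ⊆ 2^{<ω} be a prefix-free set of nonempty binary strings with Σ_{σ∈D} 2^{-|σ|} = 1 and AvgRT(D) = Σ_{σ∈D} |σ|·2^{-|σ|} < ∞, and for σ ∈ 2^{<ω} let N_D(σ) be the largest k such that some initial segment of σ is a concatenation of k elements of D. Then lim_{n→∞} (1/n)·Σ_{σ∈2^n} 2^{-n}·N_D(σ) = 1/AvgRT(D); that is, the extraction rate Rate(Φ, λ) of the functional induced by the DDG-tree with terminal set D equals 1/AvgRT(D). -/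
open Filter

/-- Some initial segment of `σ` is a concatenation of `k` elements of `D`. -/
def CatPrefix (D : Set (List Bool)) (k : ℕ) (σ : List Bool) : Prop :=
  ∃ B : Fin k → List Bool, (∀ i, B i ∈ D) ∧ (List.ofFn B).flatten <+: σ

/-!
Reading a uniformly random sequence block by block, the block boundaries form a renewal
process whose interarrival law is `p ℓ = λ(D ∩ 2^ℓ)`, with mean `AvgRT D`. Since `D` is
prefix-free, block decompositions are unique, so `N_D(σ) + 1` is the number of boundaries among
the prefixes of `σ`, and the average of `N_D` over `2^n` equals `Σ_{j ≤ n} u j - 1`, where `u j`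
is the probability of a boundary at `j`.

The elementary renewal theorem `Σ_{j ≤ n} u j / n → 1 / μ` follows from the identity
`Σ_{j ≤ m} u j · E[min(L, m - j + 1)] = m + 1`, obtained by decomposing each time `i ≤ m`
according to the last boundary before it. Bounding `E[min(L, ·)]` above by `μ` gives the lower
bound; bounding it below by `E[min(L, M + 1)]` for a fixed `M` gives the upper bound
`1 / E[min(L, M + 1)]`, which tends to `1 / μ` as `M → ∞`.
-/

section Renewal

open Topology Finset

variable {p u : ℕ → ℝ} {μ : ℝ}

/-- For a lifetime `L` with law `p`, `lifetimeTail p t = P(L > t)` and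
`truncatedMean p m = E[min(L, m + 1)]`. -/
noncomputable def lifetimeTail (p : ℕ → ℝ) (t : ℕ) : ℝ := 1 - ∑ ℓ ∈ range (t + 1), p ℓ

noncomputable def truncatedMean (p : ℕ → ℝ) (m : ℕ) : ℝ := ∑ t ∈ range (m + 1), lifetimeTail p t

theorem lifetimeTail_zero (hp0 : p 0 = 0) : lifetimeTail p 0 = 1 := by
  simp [lifetimeTail, hp0]

theorem lifetimeTail_succ (t : ℕ) : lifetimeTail p (t + 1) = lifetimeTail p t - p (t + 1) := by
  simp only [lifetimeTail, sum_range_succ _ (t + 1)]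
  ring

theorem lifetimeTail_nonneg (hp : ∀ ℓ, 0 ≤ p ℓ) (hp1 : HasSum p 1) (t : ℕ) :
    0 ≤ lifetimeTail p t :=
  sub_nonneg.2 (sum_le_hasSum _ (fun ℓ _ => hp ℓ) hp1)

theorem renewal_nonneg (hp : ∀ ℓ, 0 ≤ p ℓ) (hu0 : u 0 = 1)
    (hu : ∀ j, u (j + 1) = ∑ i ∈ range (j + 1), p (j + 1 - i) * u i) (j : ℕ) : 0 ≤ u j := by
  induction j using Nat.strong_induction_on with
  | _ j ih =>
    cases j with
    | zero => simp [hu0]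
    | succ j =>
      rw [hu]
      exact sum_nonneg fun i hi => mul_nonneg (hp _) (ih i (by simpa [Nat.lt_succ_iff] using hi))

/-- Decomposition according to the last renewal at or before time `i`. -/
theorem sum_renewal_mul_lifetimeTail (hp0 : p 0 = 0) (hu0 : u 0 = 1)
    (hu : ∀ j, u (j + 1) = ∑ i ∈ range (j + 1), p (j + 1 - i) * u i) (i : ℕ) :
    ∑ j ∈ range (i + 1), u j * lifetimeTail p (i - j) = 1 := by
  induction i with
  | zero => simp [hu0, lifetimeTail_zero hp0]
  | succ i ih =>
    rw [sum_range_succ, Nat.sub_self, lifetimeTail_zero hp0, mul_one, hu i, ← ih,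
      ← sum_add_distrib]
    refine sum_congr rfl fun j hj => ?_
    rw [show i + 1 - j = i - j + 1 by have := mem_range.1 hj; omega, lifetimeTail_succ]
    ring

theorem sum_renewal_mul_truncatedMean (hp0 : p 0 = 0) (hu0 : u 0 = 1)
    (hu : ∀ j, u (j + 1) = ∑ i ∈ range (j + 1), p (j + 1 - i) * u i) (m : ℕ) :
    ∑ j ∈ range (m + 1), u j * truncatedMean p (m - j) = m + 1 := by
  induction m with
  | zero => simp [truncatedMean, hu0, lifetimeTail_zero hp0]
  | succ m ih =>
    have hsplit : ∀ j ∈ range (m + 1), u j * truncatedMean p (m + 1 - j) =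
        u j * truncatedMean p (m - j) + u j * lifetimeTail p (m + 1 - j) := by
      intro j hj
      rw [show m + 1 - j = m - j + 1 by have := mem_range.1 hj; omega, truncatedMean,
        sum_range_succ, truncatedMean]
      ring
    have hlast := sum_renewal_mul_lifetimeTail hp0 hu0 hu (m + 1)
    rw [sum_range_succ] at hlast
    rw [sum_range_succ, sum_congr rfl hsplit, sum_add_distrib, ih]
    simp only [Nat.sub_self, truncatedMean, zero_add, sum_range_one] at hlast ⊢
    push_cast
    linarith

theorem truncatedMean_eq (m : ℕ) :
    truncatedMean p m = ∑ ℓ ∈ range (m + 1), (ℓ : ℝ) * p ℓ + (m + 1) * lifetimeTail p m := by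
  induction m with
  | zero => simp [truncatedMean]
  | succ m ih =>
    rw [truncatedMean, sum_range_succ, ← truncatedMean, ih, sum_range_succ _ (m + 1),
      lifetimeTail_succ]
    push_cast
    ring

theorem succ_mul_lifetimeTail_le (hp : ∀ ℓ, 0 ≤ p ℓ) (hp1 : HasSum p 1)
    (hμ : HasSum (fun ℓ : ℕ => (ℓ : ℝ) * p ℓ) μ) (m : ℕ) :
    (m + 1) * lifetimeTail p m ≤ μ - ∑ ℓ ∈ range (m + 1), (ℓ : ℝ) * p ℓ := by
  have htail : HasSum (fun ℓ => p (ℓ + (m + 1))) (lifetimeTail p m) :=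
    (hasSum_nat_add_iff' (m + 1)).2 hp1
  refine hasSum_le (fun ℓ => ?_) (htail.mul_left ((m : ℝ) + 1)) ((hasSum_nat_add_iff' (m + 1)).2 hμ)
  gcongr
  · exact hp _
  · push_cast
    linarith [(ℓ.cast_nonneg : (0 : ℝ) ≤ ℓ)]

theorem truncatedMean_le (hp : ∀ ℓ, 0 ≤ p ℓ) (hp1 : HasSum p 1)
    (hμ : HasSum (fun ℓ : ℕ => (ℓ : ℝ) * p ℓ) μ) (m : ℕ) : truncatedMean p m ≤ μ := by
  linarith [truncatedMean_eq (p := p) m, succ_mul_lifetimeTail_le hp hp1 hμ m]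

theorem tendsto_truncatedMean (hp : ∀ ℓ, 0 ≤ p ℓ) (hp1 : HasSum p 1)
    (hμ : HasSum (fun ℓ : ℕ => (ℓ : ℝ) * p ℓ) μ) : Tendsto (truncatedMean p) atTop (𝓝 μ) := by
  refine tendsto_of_tendsto_of_tendsto_of_le_of_le
    (hμ.tendsto_sum_nat.comp (tendsto_add_atTop_nat 1)) tendsto_const_nhds (fun m => ?_)
    (truncatedMean_le hp hp1 hμ)
  have := mul_nonneg (by positivity : (0 : ℝ) ≤ m + 1) (lifetimeTail_nonneg hp hp1 m)
  simp only [Function.comp_apply, truncatedMean_eq]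
  linarith

theorem one_le_truncatedMean (hp0 : p 0 = 0) (hp : ∀ ℓ, 0 ≤ p ℓ) (hp1 : HasSum p 1) (m : ℕ) :
    1 ≤ truncatedMean p m := by
  rw [← lifetimeTail_zero hp0]
  exact single_le_sum (fun t _ => lifetimeTail_nonneg hp hp1 t) (by simp)

theorem truncatedMean_mono (hp : ∀ ℓ, 0 ≤ p ℓ) (hp1 : HasSum p 1) : Monotone (truncatedMean p) :=
  fun _ _ h => sum_le_sum_of_subset_of_nonneg (range_subset_range.2 (by omega))
    fun t _ _ => lifetimeTail_nonneg hp hp1 t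

theorem succ_le_mul_sum_renewal (hp0 : p 0 = 0) (hp : ∀ ℓ, 0 ≤ p ℓ) (hp1 : HasSum p 1)
    (hμ : HasSum (fun ℓ : ℕ => (ℓ : ℝ) * p ℓ) μ) (hu0 : u 0 = 1)
    (hu : ∀ j, u (j + 1) = ∑ i ∈ range (j + 1), p (j + 1 - i) * u i) (n : ℕ) :
    (n + 1 : ℝ) ≤ μ * ∑ j ∈ range (n + 1), u j := by
  rw [← sum_renewal_mul_truncatedMean hp0 hu0 hu, mul_sum]
  exact sum_le_sum fun j _ => by
    rw [mul_comm μ]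
    exact mul_le_mul_of_nonneg_left (truncatedMean_le hp hp1 hμ _)
      (renewal_nonneg hp hu0 hu j)

theorem sum_renewal_mul_truncatedMean_le (hp0 : p 0 = 0) (hp : ∀ ℓ, 0 ≤ p ℓ) (hp1 : HasSum p 1)
    (hu0 : u 0 = 1) (hu : ∀ j, u (j + 1) = ∑ i ∈ range (j + 1), p (j + 1 - i) * u i)
    (n M : ℕ) : (∑ j ∈ range (n + 1), u j) * truncatedMean p M ≤ n + M + 1 := by
  have hnonneg : ∀ j, 0 ≤ u j * truncatedMean p (n + M - j) := fun j =>
    mul_nonneg (renewal_nonneg hp hu0 hu j)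
      (zero_le_one.trans (one_le_truncatedMean hp0 hp hp1 _))
  calc (∑ j ∈ range (n + 1), u j) * truncatedMean p M
      ≤ ∑ j ∈ range (n + 1), u j * truncatedMean p (n + M - j) := by
        rw [sum_mul]
        refine sum_le_sum fun j hj => mul_le_mul_of_nonneg_left ?_ (renewal_nonneg hp hu0 hu j)
        exact truncatedMean_mono hp hp1 (by have := mem_range.1 hj; omega)
    _ ≤ ∑ j ∈ range (n + M + 1), u j * truncatedMean p (n + M - j) :=
        sum_le_sum_of_subset_of_nonneg (range_subset_range.2 (by omega)) fun j _ _ => hnonneg j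
    _ = n + M + 1 := by
        rw [sum_renewal_mul_truncatedMean hp0 hu0 hu]
        push_cast
        ring

/-- The elementary renewal theorem. -/
theorem tendsto_sum_renewal_div (hp0 : p 0 = 0) (hp : ∀ ℓ, 0 ≤ p ℓ) (hp1 : HasSum p 1)
    (hμ : HasSum (fun ℓ : ℕ => (ℓ : ℝ) * p ℓ) μ) (hu0 : u 0 = 1)
    (hu : ∀ j, u (j + 1) = ∑ i ∈ range (j + 1), p (j + 1 - i) * u i) :
    Tendsto (fun n : ℕ => (∑ j ∈ range (n + 1), u j) / n) atTop (𝓝 μ⁻¹) := by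
  have hμ0 : 0 < μ := one_pos.trans_le
    ((one_le_truncatedMean hp0 hp hp1 0).trans (truncatedMean_le hp hp1 hμ 0))
  refine tendsto_order.2 ⟨fun c hc => ?_, fun c hc => ?_⟩
  · filter_upwards [eventually_gt_atTop 0] with n hn
    have hn' : (0 : ℝ) < n := by exact_mod_cast hn
    refine hc.trans_le ?_
    rw [le_div_iff₀ hn', inv_mul_le_iff₀ hμ0]
    linarith [succ_le_mul_sum_renewal hp0 hp hp1 hμ hu0 hu n]
  · obtain ⟨M, hM⟩ :=
      (((tendsto_truncatedMean hp hp1 hμ).inv₀ hμ0.ne').eventually_lt_const hc).exists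
    have hG : 0 < truncatedMean p M := one_pos.trans_le (one_le_truncatedMean hp0 hp hp1 M)
    have hlim : Tendsto (fun n : ℕ => (truncatedMean p M)⁻¹ * (1 + (M + 1) / n)) atTop
        (𝓝 ((truncatedMean p M)⁻¹ * (1 + 0))) :=
      tendsto_const_nhds.mul (tendsto_const_nhds.add (tendsto_const_div_atTop_nhds_zero_nat _))
    rw [add_zero, mul_one] at hlim
    filter_upwards [hlim.eventually_lt_const hM, eventually_gt_atTop 0] with n hlt hn
    have hn' : (0 : ℝ) < n := by exact_mod_cast hn
    refine lt_of_le_of_lt ?_ hlt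
    rw [div_le_iff₀ hn', inv_mul_eq_div, div_mul_eq_mul_div, le_div_iff₀ hG, add_mul,
      div_mul_cancel₀ _ hn'.ne']
    linarith [sum_renewal_mul_truncatedMean_le hp0 hp hp1 hu0 hu n M]

end Renewal

section Concat

inductive IsConcat (D : Set (List Bool)) : ℕ → List Bool → Prop
  | nil : IsConcat D 0 []
  | cons {k : ℕ} {d ρ : List Bool} : d ∈ D → IsConcat D k ρ → IsConcat D (k + 1) (d ++ ρ)

def Decomposable (D : Set (List Bool)) (π : List Bool) : Prop := ∃ k, IsConcat D k π

variable {D : Set (List Bool)}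

theorem isConcat_zero_iff {π : List Bool} : IsConcat D 0 π ↔ π = [] :=
  ⟨fun h => by cases h; rfl, fun h => h ▸ .nil⟩

theorem isConcat_succ_iff {k : ℕ} {π : List Bool} :
    IsConcat D (k + 1) π ↔ ∃ d ∈ D, ∃ ρ, IsConcat D k ρ ∧ π = d ++ ρ := by
  constructor
  · rintro (_ | ⟨hd, hρ⟩)
    exact ⟨_, hd, _, hρ, rfl⟩
  · rintro ⟨d, hd, ρ, hρ, rfl⟩
    exact .cons hd hρ

theorem isConcat_iff_ofFn {k : ℕ} {π : List Bool} :
    IsConcat D k π ↔ ∃ B : Fin k → List Bool, (∀ i, B i ∈ D) ∧ (List.ofFn B).flatten = π := by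
  induction k generalizing π with
  | zero => simp [isConcat_zero_iff, eq_comm]
  | succ k ih =>
    rw [isConcat_succ_iff]
    constructor
    · rintro ⟨d, hd, ρ, hρ, rfl⟩
      obtain ⟨B, hB, rfl⟩ := ih.1 hρ
      exact ⟨Fin.cons d B, Fin.cases hd hB, by simp [List.ofFn_succ]⟩
    · rintro ⟨B, hB, rfl⟩
      exact ⟨B 0, hB 0, _, ih.2 ⟨fun i => B i.succ, fun i => hB _, rfl⟩, by simp [List.ofFn_succ]⟩

theorem catPrefix_iff {k : ℕ} {σ : List Bool} :
    CatPrefix D k σ ↔ ∃ π, IsConcat D k π ∧ π <+: σ := by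
  constructor
  · rintro ⟨B, hB, hσ⟩
    exact ⟨_, isConcat_iff_ofFn.2 ⟨B, hB, rfl⟩, hσ⟩
  · rintro ⟨π, hπ, hσ⟩
    obtain ⟨B, hB, rfl⟩ := isConcat_iff_ofFn.1 hπ
    exact ⟨B, hB, hσ⟩

theorem IsConcat.exists_isPrefix_of_le {k k' : ℕ} {π : List Bool} (h : IsConcat D k π)
    (hk : k' ≤ k) : ∃ π', IsConcat D k' π' ∧ π' <+: π := by
  induction h generalizing k' with
  | nil =>
    obtain rfl := Nat.le_zero.1 hk
    exact ⟨[], .nil, List.nil_prefix⟩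
  | cons hd _ ih =>
    cases k' with
    | zero => exact ⟨[], .nil, List.nil_prefix⟩
    | succ k' =>
      obtain ⟨π', hπ', hpre⟩ := ih (k' := k') (by omega)
      exact ⟨_, .cons hd hπ', (List.prefix_append_right_inj _).2 hpre⟩

theorem catPrefix_of_le {k k' : ℕ} {σ : List Bool} (h : CatPrefix D k σ) (hk : k' ≤ k) :
    CatPrefix D k' σ := by
  obtain ⟨π, hπ, hσ⟩ := catPrefix_iff.1 h
  obtain ⟨π', hπ', hπ'π⟩ := hπ.exists_isPrefix_of_le hk
  exact catPrefix_iff.2 ⟨π', hπ', hπ'π.trans hσ⟩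

theorem PrefixFree.eq_of_isPrefix (hpf : PrefixFree D) {d d' σ : List Bool} (hd : d ∈ D)
    (hd' : d' ∈ D) (h : d <+: σ) (h' : d' <+: σ) : d = d' :=
  (List.prefix_or_prefix_of_prefix h h').elim (hpf d hd d' hd')
    fun h'' => (hpf d' hd' d hd h'').symm

theorem IsConcat.eq_of_isPrefix (hpf : PrefixFree D) {k : ℕ} {π π' σ : List Bool}
    (h : IsConcat D k π) (h' : IsConcat D k π') (hσ : π <+: σ) (hσ' : π' <+: σ) : π = π' := by
  induction h generalizing π' σ with
  | nil => exact (isConcat_zero_iff.1 h').symm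
  | @cons k d ρ hd _ ih =>
    obtain ⟨d', hd', ρ', hρ', rfl⟩ := isConcat_succ_iff.1 h'
    obtain rfl := hpf.eq_of_isPrefix hd hd' ((List.prefix_append _ _).trans hσ)
      ((List.prefix_append _ _).trans hσ')
    obtain ⟨τ, rfl⟩ := (List.prefix_append _ _).trans hσ
    rw [ih hρ' ((List.prefix_append_right_inj d).1 hσ) ((List.prefix_append_right_inj d).1 hσ')]

theorem IsConcat.count_eq (hne : [] ∉ D) (hpf : PrefixFree D) {k k' : ℕ} {π : List Bool}
    (h : IsConcat D k π) (h' : IsConcat D k' π) : k = k' := by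
  have hne' : ∀ {d ρ : List Bool}, d ∈ D → d ++ ρ ≠ [] := fun hd hdρ =>
    hne ((List.append_eq_nil_iff.1 hdρ).1 ▸ hd)
  induction h generalizing k' with
  | nil =>
    cases k' with
    | zero => rfl
    | succ k' =>
      obtain ⟨d, hd, ρ, -, hdρ⟩ := isConcat_succ_iff.1 h'
      exact (hne' hd hdρ.symm).elim
  | @cons k d ρ hd _ ih =>
    cases k' with
    | zero => exact (hne' hd (isConcat_zero_iff.1 h')).elim
    | succ k' =>
      obtain ⟨d', hd', ρ', hρ', he⟩ := isConcat_succ_iff.1 h'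
      obtain rfl := hpf.eq_of_isPrefix hd hd' (List.prefix_append d ρ)
        (he ▸ List.prefix_append d' ρ')
      rw [ih (List.append_cancel_left he ▸ hρ')]

end Concat

section Words

open Finset Classical

def words (n : ℕ) : Finset (List Bool) := (univ : Finset (Fin n → Bool)).image List.ofFn

theorem mem_words {n : ℕ} {σ : List Bool} : σ ∈ words n ↔ σ.length = n := by
  constructor
  · rintro h
    obtain ⟨f, -, rfl⟩ := mem_image.1 h
    exact List.length_ofFn
  · rintro rfl
    exact mem_image.2 ⟨fun i => σ[i], mem_univ _, List.ofFn_getElem⟩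

theorem card_words (n : ℕ) : #(words n) = 2 ^ n := by
  rw [words, card_image_of_injective _ List.ofFn_injective]
  simp

theorem sum_ofFn_eq_sum_words {M : Type*} [AddCommMonoid M] (g : List Bool → M) (n : ℕ) :
    ∑ f : Fin n → Bool, g (List.ofFn f) = ∑ σ ∈ words n, g σ :=
  (sum_image fun _ _ _ _ h => List.ofFn_injective h).symm

theorem card_image_append_product {α : Type*} [DecidableEq α] {A B : Finset (List α)} {m : ℕ}
    (hA : ∀ a ∈ A, a.length = m) : #((A ×ˢ B).image fun x => x.1 ++ x.2) = #A * #B := by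
  rw [card_image_of_injOn, card_product]
  rintro ⟨a, b⟩ hab ⟨a', b'⟩ hab' he
  simp only [coe_product, Set.mem_prod, mem_coe] at hab hab'
  obtain ⟨rfl, rfl⟩ := List.append_inj he ((hA a hab.1).trans (hA a' hab'.1).symm)
  rfl

noncomputable def codewords (D : Set (List Bool)) (ℓ : ℕ) : Finset (List Bool) :=
  {d ∈ words ℓ | d ∈ D}

noncomputable def concatWords (D : Set (List Bool)) (n : ℕ) : Finset (List Bool) :=
  {σ ∈ words n | Decomposable D σ}

variable {D : Set (List Bool)}

theorem words_filter_decomposable_take_eq {n j : ℕ} (hj : j ≤ n) :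
    {σ ∈ words n | Decomposable D (σ.take j)} =
      (concatWords D j ×ˢ words (n - j)).image fun x => x.1 ++ x.2 := by
  ext σ
  simp only [concatWords, mem_filter, mem_image, mem_product, mem_words, Prod.exists]
  constructor
  · rintro ⟨rfl, hσ⟩
    exact ⟨σ.take j, σ.drop j, ⟨⟨by simp [hj], hσ⟩, by simp⟩, σ.take_append_drop j⟩
  · rintro ⟨π, ρ, ⟨⟨hπ, hdec⟩, hρ⟩, rfl⟩
    refine ⟨by simp; omega, ?_⟩
    rwa [← hπ, List.take_left]

theorem card_words_filter_decomposable_take {n j : ℕ} (hj : j ≤ n) :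
    #{σ ∈ words n | Decomposable D (σ.take j)} = #(concatWords D j) * 2 ^ (n - j) := by
  rw [words_filter_decomposable_take_eq hj, card_image_append_product (m := j), card_words]
  exact fun a ha => mem_words.1 (mem_filter.1 ha).1

theorem concatWords_succ_eq (hne : [] ∉ D) (j : ℕ) :
    concatWords D (j + 1) = (range (j + 1)).biUnion fun i =>
      (codewords D (j + 1 - i) ×ˢ concatWords D i).image fun x => x.1 ++ x.2 := by
  ext σ
  simp only [concatWords, codewords, mem_filter, mem_biUnion, mem_range, mem_image,
    mem_product, mem_words, Prod.exists]
  constructor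
  · rintro ⟨hσ, k | k, hk⟩
    · simp [isConcat_zero_iff.1 hk] at hσ
    · obtain ⟨d, hd, ρ, hρ, rfl⟩ := isConcat_succ_iff.1 hk
      have : d.length ≠ 0 := fun h => hne (List.length_eq_zero_iff.1 h ▸ hd)
      simp only [List.length_append] at hσ
      exact ⟨ρ.length, by omega, d, ρ, ⟨⟨by omega, hd⟩, rfl, k, hρ⟩, rfl⟩
  · rintro ⟨i, hi, d, ρ, ⟨⟨hd, hdD⟩, rfl, k, hk⟩, rfl⟩
    exact ⟨by simp; omega, k + 1, .cons hdD hk⟩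

theorem card_concatWords_succ (hne : [] ∉ D) (hpf : PrefixFree D) (j : ℕ) :
    #(concatWords D (j + 1)) =
      ∑ i ∈ range (j + 1), #(codewords D (j + 1 - i)) * #(concatWords D i) := by
  rw [concatWords_succ_eq hne j, card_biUnion]
  · exact sum_congr rfl fun i _ =>
      card_image_append_product fun d hd => mem_words.1 (mem_filter.1 hd).1
  · intro i _ i' _ hii'
    refine disjoint_left.2 fun σ hσ hσ' => hii' ?_
    obtain ⟨⟨d, ρ⟩, hdρ, rfl⟩ := mem_image.1 hσ
    obtain ⟨⟨d', ρ'⟩, hdρ', he⟩ := mem_image.1 hσ'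
    simp only [codewords, concatWords, mem_product, mem_filter, mem_words] at hdρ hdρ' he
    obtain rfl := hpf.eq_of_isPrefix hdρ'.1.2 hdρ.1.2 (he ▸ List.prefix_append d' ρ')
      (List.prefix_append d ρ)
    rw [← hdρ.2.1, ← hdρ'.2.1, List.append_cancel_left he]

/-- The pairs `(j, k)` such that `σ.take j` is a concatenation of `k` codewords form the graph
of a bijection between the decomposable prefixes of `σ` and `{0, …, n}`. -/
theorem card_decomposable_take_eq_succ (hne : [] ∉ D) (hpf : PrefixFree D) {σ : List Bool}
    {n : ℕ} (hn : IsGreatest {k | CatPrefix D k σ} n) :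
    #{j ∈ range (σ.length + 1) | Decomposable D (σ.take j)} = n + 1 := by
  set S := {x ∈ range (σ.length + 1) ×ˢ range (n + 1) | IsConcat D x.2 (σ.take x.1)}
  have hfst : S.image Prod.fst = {j ∈ range (σ.length + 1) | Decomposable D (σ.take j)} := by
    ext j
    simp only [S, mem_image, mem_filter, mem_product, mem_range, Prod.exists,
      exists_and_right, exists_eq_right]
    constructor
    · rintro ⟨k, ⟨hj, -⟩, hk⟩
      exact ⟨hj, k, hk⟩
    · rintro ⟨hj, k, hk⟩
      exact ⟨k, ⟨hj, Nat.lt_succ_of_le (hn.2 (catPrefix_iff.2 ⟨_, hk, σ.take_prefix j⟩))⟩, hk⟩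
  have hsnd : S.image Prod.snd = range (n + 1) := by
    ext k
    simp only [S, mem_image, mem_filter, mem_product, mem_range, Prod.exists, exists_eq_right]
    constructor
    · rintro ⟨j, ⟨-, hk⟩, -⟩
      exact hk
    · intro hk
      obtain ⟨π, hπ, hπσ⟩ := catPrefix_iff.1 (catPrefix_of_le hn.1 (Nat.lt_succ_iff.1 hk))
      refine ⟨π.length, ⟨Nat.lt_succ_of_le hπσ.length_le, hk⟩, ?_⟩
      rwa [← List.prefix_iff_eq_take.1 hπσ]
  have hfst_inj : Set.InjOn Prod.fst (S : Set (ℕ × ℕ)) := by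
    rintro ⟨j, k⟩ h ⟨j', k'⟩ h' (rfl : j = j')
    simp only [S, coe_filter, Set.mem_ofPred_eq] at h h'
    rw [h.2.count_eq hne hpf h'.2]
  have hsnd_inj : Set.InjOn Prod.snd (S : Set (ℕ × ℕ)) := by
    rintro ⟨j, k⟩ h ⟨j', k'⟩ h' (rfl : k = k')
    simp only [S, coe_filter, mem_product, mem_range, Set.mem_ofPred_eq] at h h'
    have := congrArg List.length
      (h.2.eq_of_isPrefix hpf h'.2 (σ.take_prefix j) (σ.take_prefix j'))
    simp only [List.length_take] at this
    rw [Prod.mk.injEq]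
    omega
  rw [← hfst, card_image_of_injOn hfst_inj, ← card_image_of_injOn hsnd_inj, hsnd, card_range]

theorem sum_add_one_eq_sum_card_concatWords (hne : [] ∉ D) (hpf : PrefixFree D) (N : List Bool → ℕ)
    (hN : ∀ σ, IsGreatest {k | CatPrefix D k σ} (N σ)) (n : ℕ) :
    ∑ σ ∈ words n, (N σ + 1) = ∑ j ∈ range (n + 1), #(concatWords D j) * 2 ^ (n - j) := by
  calc ∑ σ ∈ words n, (N σ + 1)
      = ∑ σ ∈ words n, #{j ∈ range (n + 1) | Decomposable D (σ.take j)} :=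
        sum_congr rfl fun σ hσ => by
          rw [← mem_words.1 hσ, card_decomposable_take_eq_succ hne hpf (hN σ)]
    _ = ∑ j ∈ range (n + 1), #{σ ∈ words n | Decomposable D (σ.take j)} := by
        simp only [card_filter]
        exact sum_comm
    _ = ∑ j ∈ range (n + 1), #(concatWords D j) * 2 ^ (n - j) :=
        sum_congr rfl fun j hj =>
          card_words_filter_decomposable_take (Nat.lt_succ_iff.1 (mem_range.1 hj))

end Words

section Mass

open Finset Classical

noncomputable def codewordMass (D : Set (List Bool)) (ℓ : ℕ) : ℝ :=
  #(codewords D ℓ) * (1 / 2 : ℝ) ^ ℓ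

/-- The probability that a uniformly random sequence has a block boundary at position `n`:
the renewal sequence of the block lengths. -/
noncomputable def concatMass (D : Set (List Bool)) (n : ℕ) : ℝ :=
  #(concatWords D n) * (1 / 2 : ℝ) ^ n

variable {D : Set (List Bool)}

theorem codewordMass_zero (hne : [] ∉ D) : codewordMass D 0 = 0 := by
  have : codewords D 0 = ∅ := filter_eq_empty_iff.2 fun d hd hdD =>
    hne (List.length_eq_zero_iff.1 (mem_words.1 hd) ▸ hdD)
  simp [codewordMass, this]

theorem concatMass_zero : concatMass D 0 = 1 := by
  have : concatWords D 0 = {[]} := by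
    ext σ
    simp only [concatWords, mem_filter, mem_words, List.length_eq_zero_iff, mem_singleton]
    exact ⟨And.left, fun h => ⟨h, 0, h ▸ .nil⟩⟩
  simp [concatMass, this]

theorem concatMass_succ (hne : [] ∉ D) (hpf : PrefixFree D) (j : ℕ) :
    concatMass D (j + 1) = ∑ i ∈ range (j + 1), codewordMass D (j + 1 - i) * concatMass D i := by
  rw [concatMass, card_concatWords_succ hne hpf, Nat.cast_sum, sum_mul]
  refine sum_congr rfl fun i hi => ?_
  rw [codewordMass, concatMass, ← Nat.sub_add_cancel (mem_range.1 hi).le, pow_add,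
    Nat.sub_add_cancel (mem_range.1 hi).le]
  push_cast
  ring

theorem hasSum_mul_codewordMass (g : ℕ → ℝ) {a : ℝ}
    (h : HasSum (fun d : D => g (d : List Bool).length * (1 / 2 : ℝ) ^ (d : List Bool).length) a) :
    HasSum (fun ℓ => g ℓ * codewordMass D ℓ) a := by
  have hfiber : ∀ ℓ, Nat.card ((fun d : D => (d : List Bool).length) ⁻¹' {ℓ}) =
      #(codewords D ℓ) := fun ℓ => by
    rw [← Fintype.card_coe, ← Nat.card_eq_fintype_card]
    exact Nat.card_congr
      { toFun := fun d => ⟨d.1.1, mem_filter.2 ⟨mem_words.2 d.2, d.1.2⟩⟩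
        invFun := fun d => ⟨⟨d.1, (mem_filter.1 d.2).2⟩, mem_words.1 (mem_filter.1 d.2).1⟩
        left_inv := fun _ => rfl
        right_inv := fun _ => rfl }
  have hterm : ∀ ℓ, ∑' d : ((fun d : D => (d : List Bool).length) ⁻¹' {ℓ}),
      g (d : List Bool).length * (1 / 2 : ℝ) ^ (d : List Bool).length =
        g ℓ * codewordMass D ℓ := fun ℓ => by
    rw [tsum_congr fun d : ((fun d : D => (d : List Bool).length) ⁻¹' {ℓ}) => by
        rw [show ((d : D) : List Bool).length = ℓ from d.2],
      tsum_const, hfiber, codewordMass, nsmul_eq_mul]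
    ring
  simpa only [hterm] using h.tsum_fiberwise fun d : D => (d : List Bool).length

theorem weighted_sum_eq_sum_concatMass_sub_one (hne : [] ∉ D) (hpf : PrefixFree D)
    (N : List Bool → ℕ)
    (hN : ∀ σ, IsGreatest {k | CatPrefix D k σ} (N σ)) (n : ℕ) :
    ∑ f : Fin n → Bool, (1 / 2 : ℝ) ^ n * N (List.ofFn f) =
      ∑ j ∈ range (n + 1), concatMass D j - 1 := by
  have hcount : ∑ σ ∈ words n, ((N σ : ℝ) + 1) =
      ∑ j ∈ range (n + 1), (#(concatWords D j) : ℝ) * 2 ^ (n - j) := by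
    exact_mod_cast sum_add_one_eq_sum_card_concatWords hne hpf N hN n
  rw [sum_add_distrib, sum_const, card_words, nsmul_one, Nat.cast_pow, Nat.cast_ofNat] at hcount
  have hhalf : ∀ k, (1 / 2 : ℝ) ^ k * 2 ^ k = 1 := fun k => by rw [← mul_pow]; norm_num
  have hmass : ∑ j ∈ range (n + 1), concatMass D j =
      (1 / 2 : ℝ) ^ n * ∑ j ∈ range (n + 1), (#(concatWords D j) : ℝ) * 2 ^ (n - j) := by
    rw [mul_sum]
    refine sum_congr rfl fun j hj => ?_
    obtain ⟨m, rfl⟩ := Nat.exists_eq_add_of_le (Nat.lt_succ_iff.1 (mem_range.1 hj))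
    rw [concatMass, Nat.add_sub_cancel_left, pow_add]
    linear_combination -(#(concatWords D j) : ℝ) * (1 / 2 : ℝ) ^ j * hhalf m
  rw [sum_ofFn_eq_sum_words (fun σ => (1 / 2 : ℝ) ^ n * N σ), ← mul_sum, hmass, ← hcount,
    mul_add, hhalf]
  ring

end Mass

/-- Let `D` be a prefix-free set of nonempty strings with `Σ_{σ∈D} 2^{-|σ|} = 1`
and finite `AvgRT(D)`, and let `N σ` be the largest `k` such that some initial
segment of `σ` is a concatenation of `k` elements of `D` (the number of output
symbols of the DDG-functional on input `σ`).  Then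
`lim_n (1/n) Σ_{σ∈2^n} 2^{-n} N(σ) = 1/AvgRT(D)`; that is, the extraction rate
`Rate(Φ, λ) = limsup_n (1/n) Σ_{σ∈2^n} 2^{-n} N(σ)` equals `1/AvgRT(D)`. -/
theorem stmt15 (D : Set (List Bool))
    (hne : ∀ σ ∈ D, σ ≠ ([] : List Bool))
    (hpf : PrefixFree D)
    (hsum : ∑' σ : D, ((1 : ℝ) / 2) ^ (σ : List Bool).length = 1)
    (hfin : Summable (fun σ : D =>
      ((σ : List Bool).length : ℝ) * ((1 : ℝ) / 2) ^ (σ : List Bool).length))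
    (N : List Bool → ℕ)
    (hN : ∀ σ : List Bool, CatPrefix D (N σ) σ ∧ ∀ k, CatPrefix D k σ → k ≤ N σ) :
    Tendsto (fun n : ℕ =>
        (1 / n : ℝ) * ∑ f : Fin n → Bool, ((1 : ℝ) / 2) ^ n * (N (List.ofFn f) : ℝ))
      atTop (nhds (1 / AvgRT D)) ∧
    limsup (fun n : ℕ =>
        (1 / n : ℝ) * ∑ f : Fin n → Bool, ((1 : ℝ) / 2) ^ n * (N (List.ofFn f) : ℝ))
      atTop = 1 / AvgRT D := by
  have hne' : [] ∉ D := fun h => hne [] h rfl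
  suffices hlim : Tendsto
      (fun n : ℕ => (1 / n : ℝ) * (∑ j ∈ Finset.range (n + 1), concatMass D j - 1))
      atTop (nhds (1 / AvgRT D)) by
    simp only [weighted_sum_eq_sum_concatMass_sub_one hne' hpf N hN]
    exact ⟨hlim, hlim.limsup_eq⟩
  have hsummable : Summable fun σ : D => ((1 : ℝ) / 2) ^ (σ : List Bool).length :=
    hfin.of_nonneg_of_le (fun _ => by positivity) fun σ => le_mul_of_one_le_left (by positivity)
      (by exact_mod_cast List.length_pos_iff.2 (hne σ σ.2))
  have hp1 : HasSum (codewordMass D) 1 := by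
    simpa only [one_mul] using hasSum_mul_codewordMass (D := D) (fun _ => 1)
      (by simpa only [one_mul] using hsummable.hasSum_iff.2 hsum)
  have hrate := tendsto_sum_renewal_div (μ := AvgRT D) (codewordMass_zero hne')
    (fun ℓ => by unfold codewordMass; positivity) hp1
    (hasSum_mul_codewordMass (fun ℓ => ℓ) hfin.hasSum) concatMass_zero (concatMass_succ hne' hpf)
  simp only [mul_sub, one_div_mul_eq_div, mul_one]
  rw [one_div, ← sub_zero (AvgRT D)⁻¹]
  exact hrate.sub (tendsto_const_div_atTop_nhds_zero_nat 1)
end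

section
/- Let (a_n)_{n≥1} and (b_k)_{k≥1} be sequences of real numbers, let g : ℕ → ℕ satisfy g(n) → ∞, let h₁ ∈ ℝ, h₂ ∈ ℝ with h₂ > 0, and let c ∈ ℝ. Assume: (i) a_n/n → h₁; (ii) b_k/k → h₂; (iii) b_{g(n)} ≤ a_n for all n; and (iv) a_n ≤ b_{g(n)} + c for infinitely many n. Then limsup_{n→∞} g(n)/n = h₁/h₂. -/
open Filter

/-- Analytic core of the extraction-rate computation for the Levin–Kautz
procedure: if `a n / n → h₁`, `b k / k → h₂ > 0`, `g n → ∞`,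
`b (g n) ≤ a n` for all `n`, and `a n ≤ b (g n) + c` for infinitely many `n`,
then `limsup_n g(n)/n = h₁/h₂`. -/
theorem stmt16 (a b : ℕ → ℝ) (g : ℕ → ℕ) (h₁ h₂ c : ℝ)
    (hg : Tendsto g atTop atTop)
    (hh₂ : 0 < h₂)
    (ha : Tendsto (fun n : ℕ => a n / n) atTop (nhds h₁))
    (hb : Tendsto (fun k : ℕ => b k / k) atTop (nhds h₂))
    (hba : ∀ n : ℕ, b (g n) ≤ a n)
    (hab : ∃ᶠ n in atTop, a n ≤ b (g n) + c) :
    limsup (fun n : ℕ => (g n : ℝ) / n) atTop = h₁ / h₂ := by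
  have hbg : Tendsto (fun n : ℕ => b (g n) / (g n : ℝ)) atTop (nhds h₂) := hb.comp hg
  -- Step A: for 0 < δ < h₂, eventually g n / n ≤ (h₁+δ)/(h₂-δ)
  have stepA : ∀ δ : ℝ, 0 < δ → δ < h₂ →
      ∀ᶠ n : ℕ in atTop, (g n : ℝ) / n ≤ (h₁ + δ) / (h₂ - δ) := by
    intro δ hδ hδh
    have E1 : ∀ᶠ n : ℕ in atTop, h₂ - δ < b (g n) / (g n : ℝ) :=
      hbg.eventually (eventually_gt_nhds (by linarith))
    have E2 : ∀ᶠ n : ℕ in atTop, a n / n < h₁ + δ :=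
      ha.eventually (eventually_lt_nhds (by linarith))
    have E3 : ∀ᶠ n : ℕ in atTop, 1 ≤ g n := hg.eventually_ge_atTop 1
    filter_upwards [E1, E2, E3, eventually_ge_atTop 1] with n e1 e2 e3 e4
    have hgn : (0 : ℝ) < (g n : ℝ) := by exact_mod_cast e3
    have hn : (0 : ℝ) < (n : ℝ) := by exact_mod_cast e4
    have h5 : (h₂ - δ) * (g n : ℝ) ≤ b (g n) := by
      have := (le_div_iff₀ hgn).mp e1.le
      linarith
    have h6 : a n ≤ (h₁ + δ) * n := by
      have := (div_le_iff₀ hn).mp e2.le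
      linarith
    rw [div_le_div_iff₀ hn (by linarith)]
    have := hba n
    nlinarith
  have hbound : IsBoundedUnder (· ≤ ·) atTop (fun n : ℕ => (g n : ℝ) / n) :=
    isBoundedUnder_of_eventually_le (stepA (h₂/2) (by linarith) (by linarith))
  have hcobound : IsCoboundedUnder (· ≤ ·) atTop (fun n : ℕ => (g n : ℝ) / n) :=
    isCoboundedUnder_le_of_le atTop (x := 0)
      (fun n => div_nonneg (Nat.cast_nonneg _) (Nat.cast_nonneg _))
  apply le_antisymm
  · -- limsup ≤ h₁/h₂ by letting δ → 0⁺
    have hlim : Tendsto (fun δ : ℝ => (h₁ + δ) / (h₂ - δ)) (nhdsWithin 0 (Set.Ioi 0))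
        (nhds (h₁ / h₂)) := by
      have : Tendsto (fun δ : ℝ => (h₁ + δ) / (h₂ - δ)) (nhds 0) (nhds ((h₁ + 0) / (h₂ - 0))) := by
        apply Tendsto.div
        · exact tendsto_const_nhds.add tendsto_id
        · exact tendsto_const_nhds.sub tendsto_id
        · simpa using hh₂.ne'
      simpa using this.mono_left nhdsWithin_le_nhds
    refine ge_of_tendsto hlim ?_
    have hev : ∀ᶠ δ : ℝ in nhdsWithin 0 (Set.Ioi 0), δ < h₂ :=
      (eventually_lt_nhds hh₂).filter_mono nhdsWithin_le_nhds
    filter_upwards [hev, self_mem_nhdsWithin] with δ hδh hδ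
    exact limsup_le_of_le hcobound (stepA δ hδ hδh)
  · -- h₁/h₂ ≤ limsup by letting δ → 0⁺
    have hlim : Tendsto (fun δ : ℝ => (h₁ - 2*δ) / (h₂ + δ)) (nhdsWithin 0 (Set.Ioi 0))
        (nhds (h₁ / h₂)) := by
      have : Tendsto (fun δ : ℝ => (h₁ - 2*δ) / (h₂ + δ)) (nhds 0)
          (nhds ((h₁ - 2*0) / (h₂ + 0))) := by
        apply Tendsto.div
        · exact tendsto_const_nhds.sub (tendsto_const_nhds.mul tendsto_id)
        · exact tendsto_const_nhds.add tendsto_id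
        · simpa using hh₂.ne'
      simpa using this.mono_left nhdsWithin_le_nhds
    refine le_of_tendsto hlim ?_
    filter_upwards [self_mem_nhdsWithin] with δ hδ
    have hδ : (0:ℝ) < δ := hδ
    have E5 : ∀ᶠ n : ℕ in atTop, b (g n) / (g n : ℝ) < h₂ + δ :=
      hbg.eventually (eventually_lt_nhds (by linarith))
    have E6 : ∀ᶠ n : ℕ in atTop, h₁ - δ < a n / n :=
      ha.eventually (eventually_gt_nhds (by linarith))
    have E7 : ∀ᶠ n : ℕ in atTop, c ≤ δ * n := by
      have : ∀ᶠ n : ℕ in atTop, c / δ ≤ (n : ℝ) :=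
        tendsto_natCast_atTop_atTop.eventually_ge_atTop (c / δ)
      filter_upwards [this] with n hn
      calc c = δ * (c / δ) := by field_simp
        _ ≤ δ * n := by nlinarith
    have E3 : ∀ᶠ n : ℕ in atTop, 1 ≤ g n := hg.eventually_ge_atTop 1
    have key : ∃ᶠ n : ℕ in atTop, (h₁ - 2*δ) / (h₂ + δ) ≤ (g n : ℝ) / n := by
      refine (hab.and_eventually
        (E5.and (E6.and (E7.and (E3.and (eventually_ge_atTop 1)))))).mono ?_
      rintro n ⟨hc, e5, e6, e7, e3, e4⟩
      have hgn : (0 : ℝ) < (g n : ℝ) := by exact_mod_cast e3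
      have hn : (0 : ℝ) < (n : ℝ) := by exact_mod_cast e4
      have h5 : b (g n) ≤ (h₂ + δ) * (g n : ℝ) := by
        have := (div_lt_iff₀ hgn).mp e5
        linarith
      have h6 : (h₁ - δ) * n ≤ a n := by
        have := (lt_div_iff₀ hn).mp e6
        linarith
      rw [div_le_div_iff₀ (by linarith) hn]
      nlinarith
    exact le_limsup_of_frequently_le key hbound
end
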